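/- Let p be an inner function with ⟨p, 𝟙⟩ ≠ 0 (i.e. p̂(0) ≠ 0). Then pH² ∩ 𝟙^⊥ = {z·p·f : f ∈ H²}, and consequently S*(pH² ∩ 𝟙^⊥) = pH², where pH² = {p·f : f ∈ H²}. -/

import Mathlib

open MeasureTheory Complex Filter

noncomputable section

namespace HankelSchmidt

instance fact_two_pi_pos : Fact (0 < 2 * Real.pi) := ⟨Real.two_pi_pos⟩

/-- The circle `𝕋`, realized as `ℝ / 2πℤ`. -/
abbrev Tc : Type := AddCircle (2 * Real.pi)

/-- Normalized arc-length (Haar) measure on the circle. -/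
abbrev muc : Measure Tc := AddCircle.haarAddCircle

/-- The space `L²(𝕋)`. -/
abbrev Ltwo := Lp ℂ 2 muc

/-- The Hardy space `H²`: the subspace of `L²(𝕋)` of functions whose Fourier coefficients
of negative index vanish. -/
def Hardy : Submodule ℂ Ltwo where
  carrier := {f | ∀ n : ℤ, n < 0 → fourierBasis.repr f n = 0}
  add_mem' := by
    intro a b ha hb n hn
    simp [map_add, lp.coeFn_add, ha n hn, hb n hn]
  zero_mem' := by
    intro n hn
    simp
  smul_mem' := by
    intro c a ha n hn
    simp [_root_.map_smul, lp.coeFn_smul, ha n hn]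

theorem hardy_isClosed : IsClosed (Hardy : Set Ltwo) := by
  have hset : (Hardy : Set Ltwo) =
      ⋂ (n : ℤ) (_ : n < 0), {f : Ltwo | fourierBasis.repr f n = 0} := by
    ext f
    simp only [Set.mem_iInter, Set.mem_setOf_eq]
    rfl
  rw [hset]
  refine isClosed_iInter fun n => isClosed_iInter fun hn => ?_
  have hcont : Continuous fun f : Ltwo => fourierBasis.repr f n := by
    have h1 : Continuous fun g : lp (fun _ : ℤ => ℂ) 2 => g n :=
      (continuous_apply n).comp lp.uniformContinuous_coe.continuous
    exact h1.comp fourierBasis.repr.continuous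
  exact isClosed_eq hcont continuous_const

instance : CompleteSpace (Hardy : Submodule ℂ Ltwo) := hardy_isClosed.completeSpace_coe

/-- The Hardy space as a type. -/
abbrev Hd := (Hardy : Submodule ℂ Ltwo)

/-- The orthogonal projection `P : L²(𝕋) → H²`. -/
def P2 : Ltwo → Hd := fun f => Hardy.orthogonalProjectionOnto f

/-- The orthogonal projection `P`, viewed as a map `L²(𝕋) → L²(𝕋)` with range `H²`. -/
def PL : Ltwo → Ltwo := fun f => ((P2 f : Hd) : Ltwo)

theorem fourierCoeff_congr_ae {f g : Tc → ℂ} (h : f =ᵐ[muc] g) (n : ℤ) :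
    fourierCoeff f n = fourierCoeff g n :=
  integral_congr_ae (h.mono fun x hx => by dsimp only; rw [hx])

theorem mem_Hardy_iff {f : Ltwo} :
    f ∈ Hardy ↔ ∀ n : ℤ, n < 0 → fourierCoeff (f : Tc → ℂ) n = 0 := by
  constructor
  · intro hf n hn; rw [← fourierBasis_repr]; exact hf n hn
  · intro hf n hn; rw [fourierBasis_repr]; exact hf n hn

/-- Pointwise multiplication by a bounded measurable function preserves `L²`. -/
theorem memLp_mul_of_bounded {g : Tc → ℂ} (hg : AEStronglyMeasurable g muc) {C : ℝ}
    (hb : ∀ᵐ x ∂muc, ‖g x‖ ≤ C) (f : Ltwo) :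
    MemLp (fun x => g x * (f : Tc → ℂ) x) 2 muc := by
  refine MemLp.of_le_mul (c := C) (Lp.memLp f) (hg.mul (Lp.aestronglyMeasurable f)) ?_
  filter_upwards [hb] with x hx
  rw [norm_mul]
  exact mul_le_mul_of_nonneg_right hx (norm_nonneg _)

theorem fourier_abs (n : ℤ) (x : Tc) : ‖fourier n x‖ = 1 := by
  rw [fourier_apply]; exact Circle.norm_coe _

theorem fourier_norm_one (n : ℤ) (x : Tc) : ‖fourier n x‖ ≤ 1 :=
  le_of_eq (fourier_abs n x)

/-- Multiplication of an `L²` function by the monomial `z^n`. -/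
def mulF (n : ℤ) (f : Ltwo) : Ltwo :=
  (memLp_mul_of_bounded ((map_continuous (fourier n)).aestronglyMeasurable)
    (Eventually.of_forall (fourier_norm_one n)) f).toLp _

theorem mulF_coe (n : ℤ) (f : Ltwo) :
    (mulF n f : Tc → ℂ) =ᵐ[muc] fun x => fourier n x * (f : Tc → ℂ) x :=
  MemLp.coeFn_toLp _

theorem fourierCoeff_fourier_mul (f : Tc → ℂ) (m n : ℤ) :
    fourierCoeff (fun x => fourier m x * f x) n = fourierCoeff f (n - m) := by
  unfold fourierCoeff
  refine integral_congr_ae (Eventually.of_forall fun x => ?_)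
  have h : @fourier (2 * Real.pi) (-(n - m)) x = fourier (-n) x * fourier m x := by
    rw [show -(n - m) = -n + m by ring, fourier_add]
  simp only [smul_eq_mul, h]
  ring

/-- The shift operator `S : H² → H²`, `(Sf)(z) = z·f(z)`. -/
def Sop (f : Hd) : Hd :=
  ⟨mulF 1 (f : Ltwo), by
    rw [mem_Hardy_iff]
    intro n hn
    rw [fourierCoeff_congr_ae (mulF_coe 1 (f : Ltwo)) n, fourierCoeff_fourier_mul]
    exact (mem_Hardy_iff.mp f.2) (n - 1) (by omega)⟩

/-- The adjoint shift `S* : H² → H²`, `S*f = P(z̄·f)`. -/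
def SstarOp (f : Hd) : Hd := P2 (mulF (-1) (f : Ltwo))

/-- The constant function `𝟙 ∈ H²`. -/
def oneH : Hd :=
  ⟨fourierLp 2 0, by
    rw [mem_Hardy_iff]
    intro n hn
    rw [← fourierBasis_repr]
    have h1 : (fourierLp (T := 2 * Real.pi) 2 0) = fourierBasis 0 := by
      rw [coe_fourierBasis]
    rw [h1, HilbertBasis.repr_self, lp.single_apply]
    rw [Pi.single_apply, if_neg (by omega : n ≠ 0)]⟩

/-- The inner product on `H²`, linear in the FIRST argument (the paper's convention
`⟨f, g⟩ = ∫ f ḡ`). -/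
def ipH (f g : Hd) : ℂ := @inner ℂ Ltwo _ (g : Ltwo) (f : Ltwo)

/-- The inner product on `L²(𝕋)`, linear in the FIRST argument. -/
def ipL (f g : Ltwo) : ℂ := @inner ℂ Ltwo _ g f

/-- `θ ∈ H²` is an inner function if `|θ(z)| = 1` a.e. on `𝕋`. -/
def IsInnerFn (θ : Hd) : Prop := ∀ᵐ x ∂muc, ‖((θ : Ltwo) : Tc → ℂ) x‖ = 1

/-- The set `θ·H² ⊆ L²(𝕋)` of pointwise a.e. products `θ·f`, `f ∈ H²`. -/
def thetaHardy (θ : Hd) : Set Ltwo :=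
  {g : Ltwo | ∃ f : Hd, (g : Tc → ℂ) =ᵐ[muc]
    fun x => ((θ : Ltwo) : Tc → ℂ) x * ((f : Ltwo) : Tc → ℂ) x}

/-- The model space `K_θ = H² ∩ (θH²)^⊥`, as a subset of `L²(𝕋)`. -/
def KspaceL (θ : Hd) : Set Ltwo :=
  {h : Ltwo | h ∈ Hardy ∧ ∀ g ∈ thetaHardy θ, ipL h g = 0}

/-- The model space `K_θ`, as a subset of `H²`. -/
def Kspace (θ : Hd) : Set Hd := {h : Hd | (h : Ltwo) ∈ KspaceL θ}

/-- `p` is an isometric multiplier on `K_θ`: `p` is measurable and, for every `h ∈ K_θ`,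
the pointwise product `p·h` lies in `H²` and has the same norm as `h`. -/
def IsIsomMult (p : Tc → ℂ) (θ : Hd) : Prop :=
  Measurable p ∧ ∀ h ∈ Kspace θ, ∃ g : Hd,
    ((g : Ltwo) : Tc → ℂ) =ᵐ[muc] (fun x => p x * ((h : Ltwo) : Tc → ℂ) x) ∧
    ‖(g : Ltwo)‖ = ‖(h : Ltwo)‖

/-- The subspace `p·K_θ = {p·h : h ∈ K_θ}` of `H²`. -/
def wModel (p : Tc → ℂ) (θ : Hd) : Set Hd :=
  {g : Hd | ∃ h ∈ Kspace θ, ((g : Ltwo) : Tc → ℂ) =ᵐ[muc]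
    fun x => p x * ((h : Ltwo) : Tc → ℂ) x}

/-- A bounded Hankel operator on `H²`: a continuous antilinear map `H : H² → H²`
satisfying `S*H = HS`. -/
def IsHankelOp (H : Hd →L⋆[ℂ] Hd) : Prop := ∀ f : Hd, SstarOp (H f) = H (Sop f)

/-- A bounded measurable symbol on the circle (an `L^∞` function). -/
def IsBddFn (u : Tc → ℂ) : Prop := Measurable u ∧ ∃ C : ℝ, ∀ᵐ x ∂muc, ‖u x‖ ≤ C

theorem memLp_mul_conj {u : Tc → ℂ} (hu : IsBddFn u) (f : Ltwo) :
    MemLp (fun x => u x * (starRingEnd ℂ) ((f : Tc → ℂ) x)) 2 muc := by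
  obtain ⟨hmeas, C, hC⟩ := hu
  refine MemLp.of_le_mul (c := C) (Lp.memLp f)
    (hmeas.aestronglyMeasurable.mul
      (continuous_star.comp_aestronglyMeasurable (Lp.aestronglyMeasurable f))) ?_
  filter_upwards [hC] with x hx
  rw [norm_mul, RCLike.norm_conj]
  exact mul_le_mul_of_nonneg_right hx (norm_nonneg _)

/-- The Hankel operator with symbol `u`: `H_u f = P(u·f̄)`, defined on all of `L²(𝕋)`. -/
def hankelL (u : Tc → ℂ) (hu : IsBddFn u) : Ltwo → Ltwo :=
  fun f => PL ((memLp_mul_conj hu f).toLp _)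

/-- The Möbius transformation `μ(z) = (α − z)/(1 − ᾱz)` of the unit disk. -/
def mobius (α z : ℂ) : ℂ := (α - z) / (1 - (starRingEnd ℂ) α * z)

/-- The point `e^{ix} ∈ ℂ` corresponding to `x ∈ 𝕋`. -/
def circlePt (x : Tc) : ℂ := fourier 1 x

/-- The Möbius transformation `μ` viewed as a self-map of `𝕋`. -/
def mobiusT (α : ℂ) (x : Tc) : Tc := ((Complex.arg (mobius α (circlePt x)) : ℝ) : Tc)

/-- The weight `√(1 − |α|²)/(1 − ᾱz)` in the definition of `U_μ`. -/
def umuWeight (α : ℂ) (x : Tc) : ℂ :=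
  (Real.sqrt (1 - ‖α‖ ^ 2) : ℂ) / (1 - (starRingEnd ℂ) α * circlePt x)

/-- `U` is the operator `U_μ`: `(U_μ f)(z) = (√(1 − |α|²)/(1 − ᾱz))·f(μ(z))` a.e. -/
def IsUmu (α : ℂ) (U : Ltwo → Ltwo) : Prop :=
  ∀ f : Ltwo, ((U f : Ltwo) : Tc → ℂ) =ᵐ[muc]
    fun x => umuWeight α x * (f : Tc → ℂ) (mobiusT α x)


/-- The set `p·N = {p·f : f ∈ N}` of a.e. pointwise products, inside `H²`. -/
def mulSetHd (p : Hd) (N : Set Hd) : Set Hd :=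
  {g : Hd | ∃ f ∈ N, ((g : Ltwo) : Tc → ℂ) =ᵐ[muc]
    fun x => ((p : Ltwo) : Tc → ℂ) x * ((f : Ltwo) : Tc → ℂ) x}

theorem fourierCoeff_conj {T : ℝ} [Fact (0 < T)] (f : AddCircle T → ℂ) (n : ℤ) :
    fourierCoeff (fun x => (starRingEnd ℂ) (f x)) n = (starRingEnd ℂ) (fourierCoeff f (-n)) := by
  unfold fourierCoeff
  rw [← integral_conj]
  refine integral_congr_ae (Eventually.of_forall fun x => ?_)
  simp only [smul_eq_mul, map_mul, neg_neg, ← fourier_neg]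

/-- The `n`-th Fourier coefficient of `f g` is `⟨f, e_n ḡ⟩`, which Parseval turns into the
Cauchy product of the coefficient sequences. -/
theorem fourierCoeff_mul_eq_tsum (f g : Ltwo) (n : ℤ) :
    fourierCoeff (fun x => (f : Tc → ℂ) x * (g : Tc → ℂ) x) n =
      ∑' m : ℤ, fourierCoeff (f : Tc → ℂ) m * fourierCoeff (g : Tc → ℂ) (n - m) := by
  have hbdd : IsBddFn (fun x : Tc => (fourier n x : ℂ)) :=
    ⟨(map_continuous (fourier n)).measurable, 1, Eventually.of_forall (fourier_norm_one n)⟩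
  set w : Ltwo := (memLp_mul_conj hbdd g).toLp _
  have hw : (w : Tc → ℂ) =ᵐ[muc] fun x => fourier n x * (starRingEnd ℂ) ((g : Tc → ℂ) x) :=
    MemLp.coeFn_toLp _
  have h_inner :
      @inner ℂ Ltwo _ w f = fourierCoeff (fun x => (f : Tc → ℂ) x * (g : Tc → ℂ) x) n := by
    rw [MeasureTheory.L2.inner_def]
    refine integral_congr_ae ?_
    filter_upwards [hw] with x hx
    rw [RCLike.inner_apply, hx, fourier_neg]
    simp only [map_mul, Complex.conj_conj, smul_eq_mul]
    ring
  have h_repr (m : ℤ) :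
      fourierBasis.repr w m = (starRingEnd ℂ) (fourierCoeff (g : Tc → ℂ) (n - m)) := by
    rw [fourierBasis_repr, fourierCoeff_congr_ae hw m, fourierCoeff_fourier_mul,
      fourierCoeff_conj, neg_sub]
  rw [← h_inner, ← fourierBasis.repr.inner_map_map, lp.inner_eq_tsum]
  refine tsum_congr fun m => ?_
  rw [RCLike.inner_apply, h_repr, Complex.conj_conj, fourierBasis_repr, mul_comm]

theorem fourierCoeff_eq_zero_of_mem_Hardy {f : Ltwo} (hf : f ∈ Hardy) {n : ℤ} (hn : n < 0) :
    fourierCoeff (f : Tc → ℂ) n = 0 :=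
  mem_Hardy_iff.mp hf n hn

theorem fourierCoeff_mul_of_neg {f g : Ltwo} (hf : f ∈ Hardy) (hg : g ∈ Hardy) {n : ℤ}
    (hn : n < 0) : fourierCoeff (fun x => (f : Tc → ℂ) x * (g : Tc → ℂ) x) n = 0 := by
  rw [fourierCoeff_mul_eq_tsum, tsum_congr fun m => ?_, tsum_zero]
  rcases lt_or_ge m 0 with hm | hm
  · rw [fourierCoeff_eq_zero_of_mem_Hardy hf hm, zero_mul]
  · rw [fourierCoeff_eq_zero_of_mem_Hardy hg (by omega), mul_zero]

theorem fourierCoeff_mul_zero {f g : Ltwo} (hf : f ∈ Hardy) (hg : g ∈ Hardy) :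
    fourierCoeff (fun x => (f : Tc → ℂ) x * (g : Tc → ℂ) x) 0 =
      fourierCoeff (f : Tc → ℂ) 0 * fourierCoeff (g : Tc → ℂ) 0 := by
  rw [fourierCoeff_mul_eq_tsum, tsum_eq_single 0 fun m hm => ?_, sub_zero]
  rcases lt_or_ge m 0 with hm' | hm'
  · rw [fourierCoeff_eq_zero_of_mem_Hardy hf hm', zero_mul]
  · rw [fourierCoeff_eq_zero_of_mem_Hardy hg (by omega), mul_zero]

theorem ipH_oneH (g : Hd) : ipH g oneH = fourierCoeff ((g : Ltwo) : Tc → ℂ) 0 := by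
  rw [← fourierBasis_repr, HilbertBasis.repr_apply_apply, coe_fourierBasis]
  rfl

theorem mulF_mulF (m n : ℤ) (f : Ltwo) : mulF m (mulF n f) = mulF (m + n) f := by
  refine Lp.ext ?_
  filter_upwards [mulF_coe m (mulF n f), mulF_coe n f, mulF_coe (m + n) f] with x h₁ h₂ h₃
  rw [h₁, h₂, h₃, fourier_add, mul_assoc]

theorem mulF_zero (f : Ltwo) : mulF 0 f = f := by
  refine Lp.ext ?_
  filter_upwards [mulF_coe 0 f] with x hx
  rw [hx, fourier_zero, one_mul]

theorem P2_coe (q : Hd) : P2 (q : Ltwo) = q :=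
  Submodule.orthogonalProjectionOnto_mem_subspace_eq_self q

theorem SstarOp_Sop (f : Hd) : SstarOp (Sop f) = f := by
  rw [SstarOp, show ((Sop f : Hd) : Ltwo) = mulF 1 f from rfl, mulF_mulF, neg_add_cancel,
    mulF_zero, P2_coe]

theorem range_Sop : Set.range Sop = {g : Hd | ipH g oneH = 0} := by
  ext g
  simp only [Set.mem_range, Set.mem_ofPred_eq, ipH_oneH]
  constructor
  · rintro ⟨f, rfl⟩
    rw [show ((Sop f : Hd) : Ltwo) = mulF 1 f from rfl, fourierCoeff_congr_ae (mulF_coe 1 _),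
      fourierCoeff_fourier_mul]
    exact fourierCoeff_eq_zero_of_mem_Hardy f.2 (by norm_num)
  · intro hg0
    have hmem : mulF (-1) (g : Ltwo) ∈ Hardy := by
      refine mem_Hardy_iff.mpr fun n hn => ?_
      rw [fourierCoeff_congr_ae (mulF_coe (-1) _), fourierCoeff_fourier_mul]
      rcases lt_or_eq_of_le (show n - -1 ≤ 0 by omega) with h | h
      · exact fourierCoeff_eq_zero_of_mem_Hardy g.2 h
      · rwa [h]
    refine ⟨⟨_, hmem⟩, Subtype.ext ?_⟩
    change mulF 1 (mulF (-1) g) = g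
    rw [mulF_mulF, add_neg_cancel, mulF_zero]

section Multiplier

variable {p : Hd} {C : ℝ} (hC : ∀ᵐ x ∂muc, ‖((p : Ltwo) : Tc → ℂ) x‖ ≤ C)
include hC

theorem memLp_mulHd (f : Hd) :
    MemLp (fun x => ((p : Ltwo) : Tc → ℂ) x * ((f : Ltwo) : Tc → ℂ) x) 2 muc :=
  memLp_mul_of_bounded (Lp.aestronglyMeasurable _) hC f

def mulHd (f : Hd) : Hd :=
  ⟨(memLp_mulHd hC f).toLp _, by
    refine mem_Hardy_iff.mpr fun n hn => ?_
    rw [fourierCoeff_congr_ae (MemLp.coeFn_toLp (memLp_mulHd hC f))]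
    exact fourierCoeff_mul_of_neg p.2 f.2 hn⟩

theorem mulHd_coe (f : Hd) :
    (((mulHd hC f : Hd) : Ltwo) : Tc → ℂ) =ᵐ[muc]
      fun x => ((p : Ltwo) : Tc → ℂ) x * ((f : Ltwo) : Tc → ℂ) x :=
  MemLp.coeFn_toLp (memLp_mulHd hC f)

theorem range_mulHd : Set.range (mulHd hC) = mulSetHd p Set.univ := by
  ext g
  constructor
  · rintro ⟨f, rfl⟩
    exact ⟨f, Set.mem_univ _, mulHd_coe hC f⟩
  · rintro ⟨f, -, hgf⟩
    exact ⟨f, Subtype.ext (Lp.ext ((mulHd_coe hC f).trans hgf.symm))⟩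

theorem ipH_mulHd_oneH (f : Hd) : ipH (mulHd hC f) oneH = ipH p oneH * ipH f oneH := by
  rw [ipH_oneH, ipH_oneH, ipH_oneH, fourierCoeff_congr_ae (mulHd_coe hC f)]
  exact fourierCoeff_mul_zero p.2 f.2

theorem Sop_mulHd (f : Hd) : Sop (mulHd hC f) = mulHd hC (Sop f) := by
  refine Subtype.ext (Lp.ext ?_)
  filter_upwards [mulF_coe 1 ((mulHd hC f : Hd) : Ltwo), mulHd_coe hC f,
    mulHd_coe hC (Sop f), mulF_coe 1 (f : Ltwo)] with x h₁ h₂ h₃ h₄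
  change (mulF 1 _ : Tc → ℂ) x = _
  rw [h₁, h₂, h₃]
  change _ = _ * (mulF 1 _ : Tc → ℂ) x
  rw [h₄]
  ring

theorem setOf_ae_eq_fourier_one_mul :
    {g : Hd | ∃ f : Hd, ((g : Ltwo) : Tc → ℂ) =ᵐ[muc]
        fun x => fourier 1 x * ((p : Ltwo) : Tc → ℂ) x * ((f : Ltwo) : Tc → ℂ) x} =
      Set.range (Sop ∘ mulHd hC) := by
  have hcoe (f : Hd) : (((Sop (mulHd hC f) : Hd) : Ltwo) : Tc → ℂ) =ᵐ[muc]
      fun x => fourier 1 x * ((p : Ltwo) : Tc → ℂ) x * ((f : Ltwo) : Tc → ℂ) x := by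
    filter_upwards [mulF_coe 1 ((mulHd hC f : Hd) : Ltwo), mulHd_coe hC f] with x h₁ h₂
    change (mulF 1 _ : Tc → ℂ) x = _
    rw [h₁, h₂, mul_assoc]
  ext g
  constructor
  · rintro ⟨f, hgf⟩
    exact ⟨f, Subtype.ext (Lp.ext ((hcoe f).trans hgf.symm))⟩
  · rintro ⟨f, rfl⟩
    exact ⟨f, hcoe f⟩

/-- Since `p̂(0) ≠ 0`, `(p f)^(0) = p̂(0) f̂(0)` vanishes only when `f = S f'`, and then
`p f = S (p f')`. -/
theorem mulSetHd_inter_orthogonal_oneH (hp0 : ipH p oneH ≠ 0) :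
    {g : Hd | g ∈ mulSetHd p Set.univ ∧ ipH g oneH = 0} = Set.range (Sop ∘ mulHd hC) := by
  ext g
  simp only [Set.mem_ofPred_eq, ← range_mulHd hC, Set.mem_range, Function.comp_apply]
  constructor
  · rintro ⟨⟨f, rfl⟩, hg0⟩
    rw [ipH_mulHd_oneH, mul_eq_zero, or_iff_right hp0] at hg0
    obtain ⟨f', rfl⟩ := range_Sop.ge hg0
    exact ⟨f', Sop_mulHd hC f'⟩
  · rintro ⟨f, rfl⟩
    exact ⟨⟨Sop f, (Sop_mulHd hC f).symm⟩, range_Sop.le (Set.mem_range_self _)⟩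

end Multiplier

/-- For an inner function `p` with `p̂(0) ≠ 0`: `pH² ∩ 𝟙^⊥ = zpH²` and
`S*(pH² ∩ 𝟙^⊥) = pH²`. -/
theorem inner_mult_near_invariance (p : Hd) (hp : IsInnerFn p)
    (hp0 : ipH p oneH ≠ 0) :
    {g : Hd | g ∈ mulSetHd p Set.univ ∧ ipH g oneH = 0} =
      {g : Hd | ∃ f : Hd, ((g : Ltwo) : Tc → ℂ) =ᵐ[muc]
        fun x => fourier 1 x * ((p : Ltwo) : Tc → ℂ) x * ((f : Ltwo) : Tc → ℂ) x} ∧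
    SstarOp '' {g : Hd | g ∈ mulSetHd p Set.univ ∧ ipH g oneH = 0} = mulSetHd p Set.univ := by
  have hC : ∀ᵐ x ∂muc, ‖((p : Ltwo) : Tc → ℂ) x‖ ≤ 1 := hp.mono fun x hx => hx.le
  rw [mulSetHd_inter_orthogonal_oneH hC hp0, setOf_ae_eq_fourier_one_mul hC]
  refine ⟨rfl, ?_⟩
  rw [Set.range_comp, Set.image_image, ← range_mulHd hC]
  simp only [SstarOp_Sop, Set.image_id']

end HankelSchmidt
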